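/- Let N ≥ 3 be a prime and let M_k(N) be the N^k × N^k matrices over ZMod N defined recursively as above. Then for every k ≥ 1 and any two distinct columns c_i, c_j of M_k(N), the Hamming distance satisfies d_H(c_i, c_j) = (N − 1)N^{k−1}; in particular, the minimum Hamming distance between distinct rows and the minimum Hamming distance between distinct columns of M_k(N) both equal ((N − 1)/N)·N^k. -/

import Mathlib

/-- The `N × N` matrix `M_1(N)` over `ZMod N` with entries
`m_{ij} = i + Σ_{l=1}^{j-i} (N - l + 1) (mod N)` for `i ≤ j`, and `m_{ij} = m_{ji}` for `i > j`. -/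
def M1 (N : ℕ) (i j : ℕ) : ZMod N :=
  if i ≤ j then ((i + ∑ l ∈ Finset.Icc 1 (j - i), (N - l + 1) : ℕ) : ZMod N)
  else ((j + ∑ l ∈ Finset.Icc 1 (i - j), (N - l + 1) : ℕ) : ZMod N)

/-- The recursively defined `N^k × N^k` matrices `M_k(N)`: the entry of `M_{k+1}(N)` at
position `(i·N^k + p, j·N^k + q)` is `M_k(N)_{pq} + M_1(N)_{ij}`; the base case `k = 0` is the
`1 × 1` zero matrix, so that `M_1(N)` is recovered at `k = 1`. -/
def Mk (N : ℕ) : ℕ → ℕ → ℕ → ZMod N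
  | 0, _, _ => 0
  | k + 1, a, b => Mk N k (a % N ^ k) (b % N ^ k) + M1 N (a / N ^ k) (b / N ^ k)

/-!
Over `ZMod N` with `N` an odd prime, `2 * m_{ab} = a + b - (a - b)²`, so the difference of two
distinct columns `i, j` of `M_1(N)` is an affine function of the row index with slope `i - j ≠ 0`:
it takes every value exactly once. In `M_{k+1}(N)` two columns either differ in their low digit,
and then within each of the `N` row blocks the difference is a shifted column difference of
`M_k(N)`, or they differ only in their high digit, and then the difference is constant on each
block and given by `M_1(N)`. Either way every value is taken exactly `N^k` times; in particular
two distinct columns agree in exactly `N^{k-1}` rows. Rows follow by symmetry of `M_k(N)`.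
-/

open Finset

theorem M1_comm (N i j : ℕ) : M1 N i j = M1 N j i := by
  unfold M1
  rcases lt_trichotomy i j with h | rfl | h
  · rw [if_pos h.le, if_neg h.not_ge]
  · rfl
  · rw [if_neg h.not_ge, if_pos h.le]

theorem Mk_comm (N k a b : ℕ) : Mk N k a b = Mk N k b a := by
  induction k generalizing a b with
  | zero => rfl
  | succ k ih => simp only [Mk, ih (a % N ^ k), M1_comm N (a / N ^ k)]

theorem two_mul_cast_sum_Icc (N d : ℕ) (hd : d ≤ N) :
    2 * ((∑ l ∈ Icc 1 d, (N - l + 1) : ℕ) : ZMod N) = d - d ^ 2 := by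
  induction d with
  | zero => simp
  | succ d ih =>
    rw [sum_Icc_succ_top (by omega), Nat.cast_add, mul_add, ih (by omega),
      show N - (d + 1) + 1 = N - d by omega, Nat.cast_sub (by omega), ZMod.natCast_self]
    push_cast
    ring

theorem two_mul_M1 {N a b : ℕ} (ha : a < N) (hb : b < N) :
    2 * M1 N a b = a + b - ((a : ZMod N) - b) ^ 2 := by
  wlog hab : a ≤ b generalizing a b
  · rw [M1_comm, this hb ha (by omega)]
    ring
  rw [M1, if_pos hab, Nat.cast_add, mul_add, two_mul_cast_sum_Icc N (b - a) (by omega),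
    Nat.cast_sub hab]
  ring

theorem two_mul_M1_sub_M1 {N u i j : ℕ} (hu : u < N) (hi : i < N) (hj : j < N) :
    2 * (M1 N u i - M1 N u j) = 2 * (i - j) * (u : ZMod N) + (i - j) * (1 - i - j) := by
  rw [mul_sub, two_mul_M1 hu hi, two_mul_M1 hu hj]
  ring

theorem card_filter_range_mul_add_eq {N : ℕ} [NeZero N] {a : ZMod N} (ha : IsUnit a)
    (b c : ZMod N) : #{u ∈ range N | a * (u : ℕ) + b = c} = 1 := by
  have hsolve : ∀ x : ZMod N, a * x + b = c ↔ x = ↑ha.unit⁻¹ * (c - b) := fun x => by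
    rw [Units.eq_inv_mul_iff_mul_eq, IsUnit.unit_spec, eq_sub_iff_add_eq]
  refine card_eq_one.2 ⟨(↑ha.unit⁻¹ * (c - b) : ZMod N).val, ?_⟩
  ext u
  simp only [mem_filter, mem_range, mem_singleton]
  constructor
  · rintro ⟨hu, h⟩
    rw [← (hsolve u).1 h, ZMod.val_cast_of_lt hu]
  · rintro rfl
    exact ⟨ZMod.val_lt _, (hsolve _).2 (ZMod.natCast_zmod_val _)⟩

def HasUniformColumnDiffs {R : Type*} [Sub R] [DecidableEq R] (A : ℕ → ℕ → R) (n r : ℕ) :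
    Prop :=
  ∀ i < n, ∀ j < n, i ≠ j → ∀ c : R, #{t ∈ range n | A t i - A t j = c} = r

theorem hasUniformColumnDiffs_M1 {N : ℕ} [Fact N.Prime] (hN : N ≠ 2) :
    HasUniformColumnDiffs (M1 N) N 1 := by
  intro i hi j hj hij c
  have h2 : (2 : ZMod N) ≠ 0 := Ring.two_ne_zero (by rwa [ZMod.ringChar_zmod_n])
  have hij' : (i : ZMod N) - j ≠ 0 := by
    rwa [sub_ne_zero, Ne, ZMod.natCast_eq_natCast_iff', Nat.mod_eq_of_lt hi, Nat.mod_eq_of_lt hj]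
  rw [← card_filter_range_mul_add_eq (isUnit_iff_ne_zero.2 (mul_ne_zero h2 hij')) _ (2 * c)]
  refine congrArg card (filter_congr fun u hu => ?_)
  rw [← two_mul_M1_sub_M1 (mem_range.1 hu) hi hj, mul_right_inj' h2]

theorem card_filter_range_mul (p : ℕ → Prop) [DecidablePred p] (m n : ℕ) :
    #{t ∈ range (m * n) | p t} = ∑ u ∈ range m, #{s ∈ range n | p (u * n + s)} := by
  induction m with
  | zero => simp
  | succ m ih =>
    rw [sum_range_succ, ← ih]
    simp only [card_filter]
    rw [Nat.succ_mul, sum_range_add]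

/-- The Kronecker product with `+` in place of `*`: writing `a = (a / n) * n + a % n`, the block
in position `(u, v)` is `A + B u v`. -/
def addKronecker {R : Type*} [Add R] (A B : ℕ → ℕ → R) (n a b : ℕ) : R :=
  A (a % n) (b % n) + B (a / n) (b / n)

theorem Mk_succ (N k : ℕ) : Mk N (k + 1) = addKronecker (Mk N k) (M1 N) (N ^ k) := rfl

theorem addKronecker_mul_add {R : Type*} [Add R] (A B : ℕ → ℕ → R) {n s : ℕ} (hs : s < n)
    (u b : ℕ) : addKronecker A B n (u * n + s) b = A s (b % n) + B u (b / n) := by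
  rw [addKronecker, Nat.mul_add_mod_of_lt hs, Nat.add_comm, Nat.add_mul_div_right _ _ (by omega),
    Nat.div_eq_of_lt hs, Nat.zero_add]

theorem HasUniformColumnDiffs.addKronecker {R : Type*} [AddCommGroup R] [DecidableEq R]
    {A B : ℕ → ℕ → R} {n m r s : ℕ} (hA : HasUniformColumnDiffs A n r)
    (hB : HasUniformColumnDiffs B m s) (hrs : m * r = n * s) :
    HasUniformColumnDiffs (_root_.addKronecker A B n) (m * n) (m * r) := by
  intro i hi j hj hij c
  have hn : 0 < n := Nat.pos_of_mul_pos_left (by omega : 0 < m * n)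
  rw [card_filter_range_mul
    (fun t => _root_.addKronecker A B n t i - _root_.addKronecker A B n t j = c)]
  by_cases hlow : i % n = j % n
  · have hhigh : i / n ≠ j / n := fun h =>
      hij (by rw [← Nat.div_add_mod i n, h, hlow, Nat.div_add_mod])
    calc ∑ u ∈ range m, #{s ∈ range n |
          _root_.addKronecker A B n (u * n + s) i - _root_.addKronecker A B n (u * n + s) j = c}
        = ∑ u ∈ range m, #{_s ∈ range n | B u (i / n) - B u (j / n) = c} := by
          refine sum_congr rfl fun u _ => congrArg card (filter_congr fun s hs => ?_)
          rw [addKronecker_mul_add _ _ (mem_range.1 hs), addKronecker_mul_add _ _ (mem_range.1 hs),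
            hlow, add_sub_add_left_eq_sub]
      _ = ∑ u ∈ range m, if B u (i / n) - B u (j / n) = c then n else 0 := by
          simp only [filter_const, apply_ite card, card_range, card_empty]
      _ = n * s := by
          rw [sum_ite, sum_const_zero, add_zero, sum_const, smul_eq_mul, mul_comm,
            hB _ (Nat.div_lt_of_lt_mul (mul_comm m n ▸ hi)) _
              (Nat.div_lt_of_lt_mul (mul_comm m n ▸ hj)) hhigh]
      _ = m * r := hrs.symm
  · calc ∑ u ∈ range m, #{s ∈ range n |
          _root_.addKronecker A B n (u * n + s) i - _root_.addKronecker A B n (u * n + s) j = c}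
        = ∑ u ∈ range m, #{s ∈ range n |
            A s (i % n) - A s (j % n) = c - (B u (i / n) - B u (j / n))} := by
          refine sum_congr rfl fun u _ => congrArg card (filter_congr fun s hs => ?_)
          rw [addKronecker_mul_add _ _ (mem_range.1 hs), addKronecker_mul_add _ _ (mem_range.1 hs),
            add_sub_add_comm, eq_sub_iff_add_eq]
      _ = m * r := by
          rw [sum_congr rfl fun u _ => hA _ (Nat.mod_lt _ hn) _ (Nat.mod_lt _ hn) hlow _,
            sum_const, card_range, smul_eq_mul]

theorem hasUniformColumnDiffs_Mk {N : ℕ} [Fact N.Prime] (hN : N ≠ 2) {k : ℕ} (hk : 1 ≤ k) :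
    HasUniformColumnDiffs (Mk N k) (N ^ k) (N ^ (k - 1)) := by
  induction k, hk using Nat.le_induction with
  | base => simpa [Mk] using hasUniformColumnDiffs_M1 hN
  | succ k hk ih =>
    have hpow : N * N ^ (k - 1) = N ^ k := by rw [← pow_succ', Nat.sub_add_cancel hk]
    have hstep := ih.addKronecker (hasUniformColumnDiffs_M1 hN) (by rw [hpow, mul_one])
    rw [hpow] at hstep
    rwa [Mk_succ, pow_succ', Nat.add_sub_cancel]

theorem HasUniformColumnDiffs.hammingDist_eq {R : Type*} [AddGroup R] [DecidableEq R]
    {A : ℕ → ℕ → R} {n r : ℕ} (hA : HasUniformColumnDiffs A n r) {i j : Fin n} (hij : i ≠ j) :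
    hammingDist (fun t : Fin n => A t i) (fun t : Fin n => A t j) = n - r := by
  have hagree : #{t ∈ range n | A t i = A t j} = r := by
    simpa only [sub_eq_zero] using hA i i.isLt j j.isLt (Fin.val_ne_of_ne hij) 0
  have hdist : hammingDist (fun t : Fin n => A t i) (fun t : Fin n => A t j)
      = #{t ∈ range n | ¬A t i = A t j} := by
    simp only [hammingDist, card_filter, Fin.sum_univ_eq_sum_range
      (fun t => if ¬A t i = A t j then 1 else 0)]
  have hsplit := card_filter_add_card_filter_not (s := range n) (fun t => A t i = A t j)
  rw [card_range] at hsplit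
  omega

theorem csInf_setOf_ne_eq {ι α : Type*} [Nontrivial ι] [ConditionallyCompleteLattice α]
    {f : ι → ι → α} {v : α} (hf : ∀ i j, i ≠ j → f i j = v) :
    sInf {d | ∃ i j, i ≠ j ∧ d = f i j} = v := by
  obtain ⟨i₀, j₀, h₀⟩ := exists_pair_ne ι
  have hset : {d | ∃ i j, i ≠ j ∧ d = f i j} = {v} := by
    ext d
    constructor
    · rintro ⟨i, j, hij, rfl⟩
      exact hf i j hij
    · rintro rfl
      exact ⟨i₀, j₀, h₀, (hf i₀ j₀ h₀).symm⟩
  rw [hset, csInf_singleton]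

theorem Mk_columns_hammingDist_and_min_distances (N : ℕ) (hN : 3 ≤ N) (hNp : N.Prime)
    (k : ℕ) (hk : 1 ≤ k) :
    (∀ i j : Fin (N ^ k), i ≠ j →
      hammingDist (fun t : Fin (N ^ k) => Mk N k t i) (fun t : Fin (N ^ k) => Mk N k t j)
        = (N - 1) * N ^ (k - 1)) ∧
    sInf {d : ℕ | ∃ i j : Fin (N ^ k), i ≠ j ∧
        d = hammingDist (fun t : Fin (N ^ k) => Mk N k i t) (fun t : Fin (N ^ k) => Mk N k j t)}
      = (N - 1) * N ^ (k - 1) ∧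
    sInf {d : ℕ | ∃ i j : Fin (N ^ k), i ≠ j ∧
        d = hammingDist (fun t : Fin (N ^ k) => Mk N k t i) (fun t : Fin (N ^ k) => Mk N k t j)}
      = (N - 1) * N ^ (k - 1) := by
  have : Fact N.Prime := ⟨hNp⟩
  have : Nontrivial (Fin (N ^ k)) :=
    Fin.nontrivial_iff_two_le.2 (le_trans (by omega) (Nat.le_self_pow (by omega) N))
  have hcol : ∀ i j : Fin (N ^ k), i ≠ j →
      hammingDist (fun t : Fin (N ^ k) => Mk N k t i) (fun t : Fin (N ^ k) => Mk N k t j)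
        = (N - 1) * N ^ (k - 1) := fun i j hij => by
    rw [(hasUniformColumnDiffs_Mk (by omega) hk).hammingDist_eq hij, Nat.sub_one_mul,
      ← pow_succ', Nat.sub_add_cancel hk]
  refine ⟨hcol, csInf_setOf_ne_eq fun i j hij => ?_, csInf_setOf_ne_eq hcol⟩
  simp only [Mk_comm N k i, Mk_comm N k j]
  exact hcol i j hij
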